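/- Let $p^\beta$ be an odd prime power with $p$ odd. Then $2\sum_{h=1}^{(p^\beta-1)/2} \left(\sin\frac{\pi h}{p^\beta}\right)^{-1} \le p^\beta \ln p^\beta$. -/

import Mathlib

/-!
Write `p ^ β = 2H + 1`. Jordan's inequality `sin x ≥ 2x/π` on `[0, π/2]` bounds each term by
`p ^ β / (2h)`, so the left side is at most `p ^ β ∑_{h ≤ H} 1/h`. Since
`log (2h + 1) - log (2h - 1) = log ((1 + t)/(1 - t)) ≥ 2t` with `t = 1/(2h)`, the harmonic sum
telescopes to at most `log (2H + 1)`.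
-/

open Real Finset

lemma two_mul_le_log_one_add_sub_log_one_sub {t : ℝ} (ht₀ : 0 ≤ t) (ht₁ : t < 1) :
    2 * t ≤ log (1 + t) - log (1 - t) := by
  have hsum := hasSum_log_sub_log_of_abs_lt_one (x := t) (by rwa [abs_of_nonneg ht₀])
  simpa using le_hasSum hsum 0 fun k _ ↦ by positivity

lemma inv_le_log_two_mul_add_one_sub_log {x : ℝ} (hx : 1 < 2 * x) :
    x⁻¹ ≤ log (2 * x + 1) - log (2 * x - 1) := by
  have h2x : (0 : ℝ) < 2 * x := by linarith
  have hx0 : x ≠ 0 := (by linarith : (0 : ℝ) < x).ne'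
  have key := two_mul_le_log_one_add_sub_log_one_sub (inv_nonneg.2 h2x.le)
    (inv_lt_one_of_one_lt₀ hx)
  have hadd : 1 + (2 * x)⁻¹ = (2 * x + 1) / (2 * x) := by field_simp
  have hsub : 1 - (2 * x)⁻¹ = (2 * x - 1) / (2 * x) := by field_simp
  rw [hadd, hsub, log_div (by linarith) h2x.ne', log_div (by linarith) h2x.ne'] at key
  have : 2 * (2 * x)⁻¹ = x⁻¹ := by field_simp
  linarith

lemma sum_Icc_inv_le_log (H : ℕ) : ∑ h ∈ Icc 1 H, (h : ℝ)⁻¹ ≤ log (2 * H + 1) := by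
  induction H with
  | zero => simp
  | succ H ih =>
    rw [sum_Icc_succ_top (by omega)]
    have hstep := inv_le_log_two_mul_add_one_sub_log (x := (H : ℝ) + 1)
      (by linarith [H.cast_nonneg (α := ℝ)])
    rw [show 2 * ((H : ℝ) + 1) - 1 = 2 * H + 1 by ring] at hstep
    push_cast
    linarith

lemma inv_sin_le_pi_div_two_mul {x : ℝ} (hx₀ : 0 < x) (hx : x ≤ π / 2) :
    (sin x)⁻¹ ≤ π / (2 * x) := by
  have hjordan := mul_le_sin hx₀.le hx
  calc (sin x)⁻¹ ≤ (2 / π * x)⁻¹ := inv_anti₀ (by positivity) hjordan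
    _ = π / (2 * x) := by field_simp

lemma two_mul_sum_inv_sin_le (H : ℕ) :
    2 * ∑ h ∈ Icc 1 H, (sin (π * h / (2 * H + 1)))⁻¹ ≤ (2 * H + 1) * log (2 * H + 1) := by
  have hq : (0 : ℝ) < 2 * H + 1 := by positivity
  have hterm : ∀ h ∈ Icc 1 H,
      (sin (π * h / (2 * H + 1)))⁻¹ ≤ (2 * H + 1) / 2 * (h : ℝ)⁻¹ := by
    intro h hh
    obtain ⟨hh₁, hhH⟩ := mem_Icc.1 hh
    have h1 : (1 : ℝ) ≤ h := mod_cast hh₁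
    have h2h : (2 : ℝ) * h ≤ 2 * H + 1 := mod_cast (by omega : 2 * h ≤ 2 * H + 1)
    calc (sin (π * h / (2 * H + 1)))⁻¹ ≤ π / (2 * (π * h / (2 * H + 1))) := by
          refine inv_sin_le_pi_div_two_mul (by positivity) ?_
          rw [div_le_div_iff₀ hq two_pos]
          nlinarith [pi_pos]
      _ = (2 * H + 1) / 2 * (h : ℝ)⁻¹ := by field_simp
  calc 2 * ∑ h ∈ Icc 1 H, (sin (π * h / (2 * H + 1)))⁻¹
      ≤ 2 * ∑ h ∈ Icc 1 H, (2 * H + 1) / 2 * (h : ℝ)⁻¹ := by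
        gcongr 2 * ?_
        exact sum_le_sum hterm
    _ = (2 * H + 1) * ∑ h ∈ Icc 1 H, (h : ℝ)⁻¹ := by rw [← mul_sum]; ring
    _ ≤ (2 * H + 1) * log (2 * H + 1) := by gcongr; exact sum_Icc_inv_le_log H

theorem stmt_4_general (p β : ℕ) (hodd : Odd p) :
    2 * ∑ h ∈ Finset.Icc 1 ((p ^ β - 1) / 2), (Real.sin (Real.pi * h / (p ^ β : ℝ)))⁻¹ ≤
      (p ^ β : ℝ) * Real.log (p ^ β : ℝ) := by
  obtain ⟨H, hH⟩ := hodd.pow (n := β)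
  have hhalf : (p ^ β - 1) / 2 = H := by omega
  have hcast : (p : ℝ) ^ β = 2 * H + 1 := by exact_mod_cast hH
  rw [hhalf, hcast]
  exact two_mul_sum_inv_sin_le H

theorem stmt_4 (p β : ℕ) (hp : p.Prime) (hodd : Odd p) (hβ : 1 ≤ β) :
    2 * ∑ h ∈ Finset.Icc 1 ((p ^ β - 1) / 2), (Real.sin (Real.pi * h / (p ^ β : ℝ)))⁻¹ ≤
      (p ^ β : ℝ) * Real.log (p ^ β : ℝ) :=
  stmt_4_general p β hodd
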